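/- Let k ≥ 2, T > 0, and g : [0,∞) → ℝ nonnegative measurable, supported on [0,T], with ∫₀^∞ g² = Υ > 0 and μ = (∫₀^∞ u g(u)² du)/Υ satisfying μ + T/k < 1. Then the integral of ∏_{j=2}^k g(u_j)² over the region {u_j ≥ 0, Σ_{j=2}^k u_j > k − T} is at most Υ^{k-1} · μT/((k−1)Θ²), where Θ = (k−T)/(k−1) − μ. -/

import Mathlib

/-!
Write `f = g²` and `n = k - 1`. Under the density `∏ f(u_j)` the coordinates are independent with
mean `μ`, so the second moment of `∑ (u_j - μ)` is `n` times the one-dimensional variance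
`∫ (u - μ)² f`, which is at most `T μ Υ` because `u² ≤ T u` on the support of `f`. On the region,
`∑ (u_j - μ) > n Θ`, and a weighted Chebyshev inequality gives the bound.
-/

open MeasureTheory Real Set Finset

section SecondMoment

variable {ι : Type*} [DecidableEq ι] {ν : Measure ℝ} {f : ℝ → ℝ} {m : ℝ}

/-- The `l`-th factor of the `(i, j)` term in the expansion of `(∑ i, (u i - m))² ∏ l, f (u l)`. -/
def pairFactor (f : ℝ → ℝ) (m : ℝ) (i j l : ι) (x : ℝ) : ℝ :=
  (if l = i then x - m else 1) * ((if l = j then x - m else 1) * f x)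

lemma integrable_pairFactor (hf : Integrable f ν) (hf₁ : Integrable (fun x ↦ (x - m) * f x) ν)
    (hf₂ : Integrable (fun x ↦ (x - m) ^ 2 * f x) ν) (i j l : ι) :
    Integrable (pairFactor f m i j l) ν := by
  rcases eq_or_ne l i with rfl | hi <;> rcases eq_or_ne l j with rfl | hj
  · convert hf₂ using 1; ext x; simp only [pairFactor, if_true]; ring
  · convert hf₁ using 1; ext x; simp [pairFactor, hj]
  · convert hf₁ using 1; ext x; simp [pairFactor, hi]
  · convert hf using 1; ext x; simp [pairFactor, hi, hj]

variable [Fintype ι]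

lemma prod_pairFactor (i j : ι) (u : ι → ℝ) :
    ∏ l, pairFactor f m i j l (u l) = (u i - m) * ((u j - m) * ∏ l, f (u l)) := by
  simp only [pairFactor, prod_mul_distrib, prod_ite_eq', Finset.mem_univ, if_true]

lemma sq_sum_sub_mul_prod_eq (u : ι → ℝ) :
    (∑ i, (u i - m)) ^ 2 * ∏ l, f (u l) = ∑ i, ∑ j, ∏ l, pairFactor f m i j l (u l) := by
  rw [sq, sum_mul_sum, sum_mul]
  simp only [sum_mul, prod_pairFactor, mul_assoc]

variable [SigmaFinite ν]

lemma integral_prod_pairFactor_self (i : ι) :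
    ∫ u, ∏ l, pairFactor f m i i l (u l) ∂Measure.pi (fun _ ↦ ν) =
      (∫ x, (x - m) ^ 2 * f x ∂ν) * (∫ x, f x ∂ν) ^ (Fintype.card ι - 1) := by
  rw [integral_fintype_prod_eq_prod, ← mul_prod_erase _ _ (mem_univ i)]
  congr 1
  · simp [pairFactor, sq, mul_assoc]
  · rw [prod_eq_pow_card (b := ∫ x, f x ∂ν) fun l hl ↦ by simp [pairFactor, ne_of_mem_erase hl],
      card_erase_of_mem (mem_univ i), card_univ]

lemma integral_prod_pairFactor_of_ne (hmean : ∫ x, (x - m) * f x ∂ν = 0) {i j : ι} (hij : i ≠ j) :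
    ∫ u, ∏ l, pairFactor f m i j l (u l) ∂Measure.pi (fun _ ↦ ν) = 0 := by
  rw [integral_fintype_prod_eq_prod]
  exact prod_eq_zero (mem_univ i) (by simpa [pairFactor, hij] using hmean)

lemma integrable_sq_sum_sub_mul_prod (hf : Integrable f ν)
    (hf₁ : Integrable (fun x ↦ (x - m) * f x) ν) (hf₂ : Integrable (fun x ↦ (x - m) ^ 2 * f x) ν) :
    Integrable (fun u : ι → ℝ ↦ (∑ i, (u i - m)) ^ 2 * ∏ l, f (u l))
      (Measure.pi fun _ ↦ ν) := by
  simp_rw [sq_sum_sub_mul_prod_eq]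
  exact integrable_finsetSum _ fun i _ ↦ integrable_finsetSum _ fun j _ ↦
    Integrable.fintype_prod fun l ↦ integrable_pairFactor hf hf₁ hf₂ i j l

lemma integral_sq_sum_sub_mul_prod (hf : Integrable f ν)
    (hf₁ : Integrable (fun x ↦ (x - m) * f x) ν) (hf₂ : Integrable (fun x ↦ (x - m) ^ 2 * f x) ν)
    (hmean : ∫ x, (x - m) * f x ∂ν = 0) :
    ∫ u : ι → ℝ, (∑ i, (u i - m)) ^ 2 * ∏ l, f (u l) ∂Measure.pi (fun _ ↦ ν) =
      Fintype.card ι * (∫ x, (x - m) ^ 2 * f x ∂ν) * (∫ x, f x ∂ν) ^ (Fintype.card ι - 1) := by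
  have hint (i j : ι) : Integrable (fun u : ι → ℝ ↦ ∏ l, pairFactor f m i j l (u l))
      (Measure.pi fun _ ↦ ν) :=
    Integrable.fintype_prod fun l ↦ integrable_pairFactor hf hf₁ hf₂ i j l
  simp_rw [sq_sum_sub_mul_prod_eq]
  rw [integral_finsetSum _ fun i _ ↦ integrable_finsetSum _ fun j _ ↦ hint i j]
  simp_rw [integral_finsetSum _ fun j _ ↦ hint _ j]
  rw [sum_congr rfl fun i _ ↦ sum_eq_single_of_mem i (mem_univ i) fun j _ hji ↦
    integral_prod_pairFactor_of_ne hmean hji.symm]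
  simp [integral_prod_pairFactor_self, mul_assoc]

end SecondMoment

lemma integrable_mul_of_isCompact_support {ν : Measure ℝ} {f p : ℝ → ℝ} {K : Set ℝ}
    (hK : IsCompact K) (hf : Integrable f ν) (hfK : ∀ x ∉ K, f x = 0) (hp : Continuous p) :
    Integrable (fun x ↦ p x * f x) ν :=
  (hf.integrableOn.continuousOn_mul hp.continuousOn hK).integrable_of_forall_notMem_eq_zero
    fun x hx ↦ by simp [hfK x hx]

lemma integral_sq_sub_mul_le {ν : Measure ℝ} {f : ℝ → ℝ} {T m : ℝ} (hf : Integrable f ν)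
    (hf0 : ∀ x, 0 ≤ f x) (hfT : ∀ x ∉ Icc 0 T, f x = 0)
    (hm : ∫ x, x * f x ∂ν = m * ∫ x, f x ∂ν) :
    ∫ x, (x - m) ^ 2 * f x ∂ν ≤ T * m * ∫ x, f x ∂ν := by
  have hx : Integrable (fun x ↦ x * f x) ν :=
    integrable_mul_of_isCompact_support isCompact_Icc hf hfT continuous_id
  have hbound (x : ℝ) : (x - m) ^ 2 * f x ≤ (T - 2 * m) * (x * f x) + m ^ 2 * f x := by
    by_cases hxT : x ∈ Icc 0 T
    · nlinarith [mul_nonneg (mul_nonneg hxT.1 (sub_nonneg.2 hxT.2)) (hf0 x)]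
    · simp [hfT x hxT]
  calc ∫ x, (x - m) ^ 2 * f x ∂ν
      ≤ ∫ x, (T - 2 * m) * (x * f x) + m ^ 2 * f x ∂ν :=
        integral_mono (integrable_mul_of_isCompact_support isCompact_Icc hf hfT (by fun_prop))
          ((hx.const_mul _).add (hf.const_mul _)) hbound
    _ = T * m * ∫ x, f x ∂ν - m ^ 2 * ∫ x, f x ∂ν := by
        rw [integral_add (hx.const_mul _) (hf.const_mul _), integral_const_mul,
          integral_const_mul, hm]
        ring
    _ ≤ T * m * ∫ x, f x ∂ν :=
        sub_le_self _ (mul_nonneg (sq_nonneg m) (integral_nonneg (μ := ν) hf0))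

lemma setIntegral_le_integral_sq_mul_div {α : Type*} [MeasurableSpace α] {μ : Measure α}
    {F X : α → ℝ} {s : Set α} {c : ℝ} (hs : MeasurableSet s) (hc : 0 < c)
    (hF : IntegrableOn F s μ) (hF0 : ∀ a, 0 ≤ F a) (hXF : Integrable (fun a ↦ X a ^ 2 * F a) μ)
    (hX : ∀ a ∈ s, c ≤ |X a|) :
    ∫ a in s, F a ∂μ ≤ (∫ a, X a ^ 2 * F a ∂μ) / c ^ 2 := by
  rw [le_div_iff₀ (by positivity), ← integral_mul_const]
  calc ∫ a in s, F a * c ^ 2 ∂μ ≤ ∫ a in s, X a ^ 2 * F a ∂μ := by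
        refine setIntegral_mono_on (hF.mul_const _) hXF.integrableOn hs fun a ha ↦ ?_
        have hcX : c ^ 2 ≤ X a ^ 2 := by simpa using pow_le_pow_left₀ hc.le (hX a ha) 2
        rw [mul_comm]
        exact mul_le_mul_of_nonneg_right hcX (hF0 a)
    _ ≤ ∫ a, X a ^ 2 * F a ∂μ :=
        setIntegral_le_integral hXF (.of_forall fun a ↦ mul_nonneg (sq_nonneg _) (hF0 a))

lemma setIntegral_prod_le_of_le_sum_sub {ι : Type*} [Fintype ι] {ν : Measure ℝ} [SigmaFinite ν]
    {f : ℝ → ℝ} {T m c : ℝ} {s : Set (ι → ℝ)} (hs : MeasurableSet s) (hc : 0 < c)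
    (hf : Integrable f ν) (hf0 : ∀ x, 0 ≤ f x) (hfT : ∀ x ∉ Icc 0 T, f x = 0)
    (hm : ∫ x, x * f x ∂ν = m * ∫ x, f x ∂ν) (hsep : ∀ u ∈ s, c ≤ ∑ i, (u i - m)) :
    ∫ u in s, ∏ i, f (u i) ∂Measure.pi (fun _ ↦ ν) ≤
      Fintype.card ι * (T * m * ∫ x, f x ∂ν) * (∫ x, f x ∂ν) ^ (Fintype.card ι - 1) / c ^ 2 := by
  classical
  have hx : Integrable (fun x ↦ x * f x) ν :=
    integrable_mul_of_isCompact_support isCompact_Icc hf hfT continuous_id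
  have hf₁ : Integrable (fun x ↦ (x - m) * f x) ν :=
    integrable_mul_of_isCompact_support isCompact_Icc hf hfT (by fun_prop)
  have hf₂ : Integrable (fun x ↦ (x - m) ^ 2 * f x) ν :=
    integrable_mul_of_isCompact_support isCompact_Icc hf hfT (by fun_prop)
  have hcentered : ∫ x, (x - m) * f x ∂ν = 0 := by
    simp_rw [sub_mul]
    rw [integral_sub hx (hf.const_mul m), integral_const_mul, hm, sub_self]
  have hmass : 0 ≤ ∫ x, f x ∂ν := integral_nonneg hf0
  calc ∫ u in s, ∏ i, f (u i) ∂Measure.pi (fun _ ↦ ν)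
      ≤ (∫ u, (∑ i, (u i - m)) ^ 2 * ∏ i, f (u i) ∂Measure.pi (fun _ ↦ ν)) / c ^ 2 :=
        setIntegral_le_integral_sq_mul_div hs hc (Integrable.fintype_prod fun _ ↦ hf).integrableOn
          (fun u ↦ prod_nonneg fun i _ ↦ hf0 _) (integrable_sq_sum_sub_mul_prod hf hf₁ hf₂)
          fun u hu ↦ (hsep u hu).trans (le_abs_self _)
    _ = Fintype.card ι * (∫ x, (x - m) ^ 2 * f x ∂ν) * (∫ x, f x ∂ν) ^ (Fintype.card ι - 1)
          / c ^ 2 := by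
        rw [integral_sq_sum_sub_mul_prod hf hf₁ hf₂ hcentered]
    _ ≤ _ := by gcongr; exact integral_sq_sub_mul_le hf hf0 hfT hm

lemma sub_pos_of_add_div_lt_one {k T μ : ℝ} (hk : 1 < k) (hμ : 0 ≤ μ) (h : μ + T / k < 1) :
    0 < (k - T) / (k - 1) - μ := by
  have hk0 : 0 < k := by linarith
  have hkT : 0 < k - T := by
    have : T / k < 1 := by linarith
    rw [div_lt_one hk0] at this
    linarith
  have hμk : μ < (k - T) / k := by rw [sub_div, div_self hk0.ne']; linarith
  have : (k - T) / k ≤ (k - T) / (k - 1) :=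
    div_le_div_of_nonneg_left hkT.le (by linarith) (by linarith)
  linarith

lemma integrable_of_integrableOn_Ioi_zero {h : ℝ → ℝ} (h0 : ∀ x < 0, h x = 0)
    (hh : IntegrableOn h (Ioi 0)) : Integrable h :=
  ((integrableOn_Ici_iff_integrableOn_Ioi).2 hh).integrable_of_forall_notMem_eq_zero
    fun x hx ↦ h0 x (not_le.1 hx)

lemma integral_Ioi_zero_eq_integral {h : ℝ → ℝ} (h0 : ∀ x < 0, h x = 0) :
    ∫ x in Ioi 0, h x = ∫ x, h x := by
  rw [← integral_Ici_eq_integral_Ioi,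
    setIntegral_eq_integral_of_forall_compl_eq_zero fun x hx ↦ h0 x (by simpa using hx)]

theorem stmt_8_general (k : ℕ) (hk : 2 ≤ k) (T : ℝ) (g : ℝ → ℝ) (Υ μ : ℝ)
    (hg_supp : ∀ u, u ∉ Set.Icc 0 T → g u = 0)
    (hΥ : ∫ u in Set.Ioi (0:ℝ), (g u)^2 = Υ) (hΥpos : 0 < Υ)
    (hμ : μ = (∫ u in Set.Ioi (0:ℝ), u * (g u)^2) / Υ)
    (hsmall : μ + T / k < 1) :
    ∫ u in {u : Fin (k-1) → ℝ | (∀ j, 0 ≤ u j) ∧ (k:ℝ) - T < ∑ j, u j},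
        ∏ j, (g (u j))^2
      ≤ Υ^(k-1) * (μ * T / (((k:ℝ) - 1) * (((k:ℝ) - T)/((k:ℝ) - 1) - μ)^2)) := by
  set f : ℝ → ℝ := fun u ↦ g u ^ 2
  set n := k - 1
  set Θ := ((k:ℝ) - T) / ((k:ℝ) - 1) - μ
  have hn : (n : ℝ) = k - 1 := by rw [Nat.cast_sub (by omega), Nat.cast_one]
  have hn_pos : (0 : ℝ) < n := by rw [hn]; linarith [(Nat.ofNat_le_cast.2 hk : (2:ℝ) ≤ k)]
  have hfT (x : ℝ) (hx : x ∉ Icc 0 T) : f x = 0 := by simp [f, hg_supp x hx]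
  have hf_neg (x : ℝ) (hx : x < 0) : f x = 0 := hfT x fun h ↦ hx.not_ge h.1
  have hf : Integrable f := integrable_of_integrableOn_Ioi_zero hf_neg <| by
    by_contra h
    exact hΥpos.ne' (hΥ ▸ integral_undef h)
  have hf_int : ∫ x, f x = Υ := by rw [← integral_Ioi_zero_eq_integral hf_neg, hΥ]
  have hmean : ∫ x, x * f x = μ * ∫ x, f x := by
    rw [← integral_Ioi_zero_eq_integral fun x hx ↦ by simp [hf_neg x hx], hf_int, hμ,
      div_mul_cancel₀ _ hΥpos.ne']
  have hμ0 : 0 ≤ μ := hμ ▸ div_nonneg (setIntegral_nonneg measurableSet_Ioi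
    fun x hx ↦ mul_nonneg (le_of_lt hx) (sq_nonneg _)) hΥpos.le
  have hΘ : 0 < Θ := sub_pos_of_add_div_lt_one (by exact_mod_cast hk) hμ0 hsmall
  have hsep (u : Fin n → ℝ) (hu : u ∈ {u : Fin n → ℝ | (∀ j, 0 ≤ u j) ∧ (k:ℝ) - T < ∑ j, u j}) :
      n * Θ ≤ ∑ j, (u j - μ) := by
    have hnΘ : n * Θ = (k:ℝ) - T - n * μ := by
      rw [hn, mul_sub, mul_div_cancel₀ _ (hn ▸ hn_pos.ne')]
    simp only [sum_sub_distrib, sum_const, card_univ, Fintype.card_fin, nsmul_eq_mul]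
    linarith [hu.2]
  refine (setIntegral_prod_le_of_le_sum_sub (by measurability) (by positivity) hf
    (fun x ↦ sq_nonneg (g x)) hfT hmean hsep).trans_eq ?_
  rw [Fintype.card_fin, hf_int, ← hn, ← mul_pow_sub_one (by omega : n ≠ 0)]
  field_simp

theorem stmt_8 (k : ℕ) (hk : 2 ≤ k) (T : ℝ) (hT : 0 < T) (g : ℝ → ℝ) (Υ μ : ℝ)
    (hg_meas : Measurable g) (hg_nonneg : ∀ u, 0 ≤ g u)
    (hg_supp : ∀ u, u ∉ Set.Icc 0 T → g u = 0)
    (hΥ : ∫ u in Set.Ioi (0:ℝ), (g u)^2 = Υ) (hΥpos : 0 < Υ)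
    (hμ : μ = (∫ u in Set.Ioi (0:ℝ), u * (g u)^2) / Υ)
    (hsmall : μ + T / k < 1) :
    ∫ u in {u : Fin (k-1) → ℝ | (∀ j, 0 ≤ u j) ∧ (k:ℝ) - T < ∑ j, u j},
        ∏ j, (g (u j))^2
      ≤ Υ^(k-1) * (μ * T / (((k:ℝ) - 1) * (((k:ℝ) - T)/((k:ℝ) - 1) - μ)^2)) :=
  stmt_8_general k hk T g Υ μ hg_supp hΥ hΥpos hμ hsmall
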